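/- Suppose a coboundary operator D on a graded complex decomposes as D = D′ + D″ with D′: Cⁿ_k → Cⁿ⁺¹_k and D″: Cⁿ_k → Cⁿ⁺¹_{k+1} for k ≥ a, where D″ is injective on the components with k = a and the cohomology of D″ vanishes on components with k > a. Then the cohomology of D vanishes on the subcomplex ⊕_{k≥a} Cⁿ_k. -/
import Mathlib


/-- The total coboundary `D = D′ + D″` of a bigraded complex, where
`D′ : Cⁿ_k → Cⁿ⁺¹_k` preserves the second grading and `D″ : Cⁿ_k → Cⁿ⁺¹_{k+1}`
raises it by one (here the second grading is indexed from `k = a`, renormalized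
to start at `0`). -/
def Dtot {K : Type*} [Field K] (C : ℕ → ℕ → Type*)
    [∀ n k, AddCommGroup (C n k)] [∀ n k, Module K (C n k)]
    (D' : ∀ n k, C n k →ₗ[K] C (n + 1) k)
    (D'' : ∀ n k, C n k →ₗ[K] C (n + 1) (k + 1))
    (n : ℕ) (f : ∀ k, C n k) : ∀ k, C (n + 1) k
  | 0 => D' n 0 (f 0)
  | (k + 1) => D' n (k + 1) (f (k + 1)) + D'' n k (f k)

/-- Suppose a coboundary operator `D` on a bigraded complex decomposes as
`D = D′ + D″` as above, with `D²= 0`, the components vanishing for `k > n`,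
`D″` injective on the lowest components (`k = a`, i.e. index `0`), and the
cohomology of `D″` vanishing elsewhere. Then the cohomology of `D` vanishes on
the subcomplex `⊕_{k ≥ a} Cⁿ_k`: every `D`-cocycle is a `D`-coboundary. -/
theorem vanishing_from_spectral_decomposition
    {K : Type*} [Field K] (C : ℕ → ℕ → Type*)
    [∀ n k, AddCommGroup (C n k)] [∀ n k, Module K (C n k)]
    (D' : ∀ n k, C n k →ₗ[K] C (n + 1) k)
    (D'' : ∀ n k, C n k →ₗ[K] C (n + 1) (k + 1))
    (hbound : ∀ n k : ℕ, n < k → Subsingleton (C n k))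
    (hD2 : ∀ (n : ℕ) (f : ∀ k, C n k),
      Dtot C D' D'' (n + 1) (Dtot C D' D'' n f) = 0)
    (hinj : ∀ n : ℕ, Function.Injective (D'' n 0))
    (hexact : ∀ (n k : ℕ) (x : C (n + 1) (k + 1)),
      D'' (n + 1) (k + 1) x = 0 → ∃ y : C n k, D'' n k y = x) :
    ∀ (n : ℕ) (f : ∀ k, C (n + 1) k),
      Dtot C D' D'' (n + 1) f = 0 → ∃ g : ∀ k, C n k, Dtot C D' D'' n g = f := by
  classical
  -- evaluation of `Dtot` on single-component sequences
  have Dsingle : ∀ (m j : ℕ) (x : C m j) (k : ℕ),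
      Dtot C D' D'' m (Pi.single j x) k
        = Pi.single j (D' m j x) k + Pi.single (j+1) (D'' m j x) k := by
    intro m j x k
    cases k with
    | zero =>
      cases j with
      | zero => simp [Dtot]
      | succ j =>
        have h1 : (0:ℕ) ≠ j + 1 := by omega
        have h2 : (0:ℕ) ≠ j + 1 + 1 := by omega
        simp [Dtot, Pi.single_eq_of_ne h1, Pi.single_eq_of_ne h2]
    | succ k =>
      rcases eq_or_ne (k+1) j with rfl | h
      · have h1 : k ≠ k + 1 := by omega
        have h2 : (k+1:ℕ) ≠ k + 1 + 1 := by omega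
        simp [Dtot, Pi.single_eq_same, Pi.single_eq_of_ne h1, Pi.single_eq_of_ne h2]
      · rcases eq_or_ne k j with rfl | h'
        · have h2 : (k+1:ℕ) ≠ k := by omega
          simp [Dtot, Pi.single_eq_same, Pi.single_eq_of_ne h2, Pi.single_eq_of_ne h]
        · have h2 : (k+1:ℕ) ≠ j + 1 := by omega
          simp [Dtot, Pi.single_eq_of_ne h, Pi.single_eq_of_ne h', Pi.single_eq_of_ne h2]
  -- the three componentwise relations coming from `D² = 0`
  have hsq : ∀ (m j : ℕ) (x : C m j) (i : ℕ),
      Pi.single j (D' (m+1) j (D' m j x)) i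
        + Pi.single (j+1) (D' (m+1) (j+1) (D'' m j x) + D'' (m+1) j (D' m j x)) i
        + Pi.single (j+1+1) (D'' (m+1) (j+1) (D'' m j x)) i = 0 := by
    intro m j x i
    have h := congrFun (hD2 m (Pi.single j x)) i
    have e1 : Dtot C D' D'' m (Pi.single j x)
        = fun k => Pi.single j (D' m j x) k + Pi.single (j+1) (D'' m j x) k := by
      funext k; exact Dsingle m j x k
    rw [e1] at h
    have e2 : Dtot C D' D'' (m+1)
        (fun k => Pi.single j (D' m j x) k + Pi.single (j+1) (D'' m j x) k) i
        = Dtot C D' D'' (m+1) (Pi.single j (D' m j x)) i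
          + Dtot C D' D'' (m+1) (Pi.single (j+1) (D'' m j x)) i := by
      cases i with
      | zero => simp [Dtot]
      | succ i => simp [Dtot]; abel
    rw [e2, Dsingle, Dsingle] at h
    rw [Pi.zero_apply] at h
    rw [← h]
    have e3 : (Pi.single (j+1) (D' (m+1) (j+1) (D'' m j x) + D'' (m+1) j (D' m j x)) i : C (m+1+1) i)
        = Pi.single (j+1) (D' (m+1) (j+1) (D'' m j x)) i
          + Pi.single (j+1) (D'' (m+1) j (D' m j x)) i := by
      rcases eq_or_ne i (j+1) with rfl | h'
      · simp [Pi.single_eq_same]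
      · simp [Pi.single_eq_of_ne h']
    rw [e3]
    abel
  have hA : ∀ (m j : ℕ) (x : C m j), D' (m+1) j (D' m j x) = 0 := by
    intro m j x
    have h := hsq m j x j
    have h1 : j ≠ j + 1 := by omega
    have h2 : j ≠ j + 1 + 1 := by omega
    simpa [Pi.single_eq_same, Pi.single_eq_of_ne h1, Pi.single_eq_of_ne h2] using h
  have hB : ∀ (m j : ℕ) (x : C m j),
      D' (m+1) (j+1) (D'' m j x) + D'' (m+1) j (D' m j x) = 0 := by
    intro m j x
    have h := hsq m j x (j+1)
    have h1 : j + 1 ≠ j := by omega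
    have h2 : j + 1 ≠ j + 1 + 1 := by omega
    simpa [Pi.single_eq_same, Pi.single_eq_of_ne h1, Pi.single_eq_of_ne h2] using h
  -- main construction
  intro n f hf
  have hfz : ∀ k, n + 1 < k → f k = 0 := by
    intro k hk
    haveI := hbound (n+1) k hk
    exact Subsingleton.elim _ _
  have hcoc : ∀ k, D' (n+1) (k+1) (f (k+1)) + D'' (n+1) k (f k) = 0 := by
    intro k
    have h := congrFun hf (k+1)
    simpa [Dtot] using h
  set Q : ℕ → Prop := fun m => ∃ g : ∀ k, C n k,
    ∀ k, m ≤ k → D'' n k (g k) = f (k+1) - D' n (k+1) (g (k+1)) with hQdef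
  have base : Q (n+1) := by
    refine ⟨0, fun k hk => ?_⟩
    have : f (k+1) = 0 := hfz (k+1) (by omega)
    simp [this]
  have step : ∀ m, Q (m+1) → Q m := by
    rintro m ⟨g, hg⟩
    set x : C (n+1) (m+1) := f (m+1) - D' n (m+1) (g (m+1)) with hx
    have hb' : D'' (n+1) (m+1) (D' n (m+1) (g (m+1)))
        = - D' (n+1) (m+1+1) (D'' n (m+1) (g (m+1))) :=
      eq_neg_of_add_eq_zero_right (hB n (m+1) (g (m+1)))
    have hclosed : D'' (n+1) (m+1) x = 0 := by
      rw [hx, map_sub, hb', hg (m+1) le_rfl, map_sub, hA n (m+1+1) (g (m+1+1))]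
      simp only [sub_zero, sub_neg_eq_add]
      exact (add_comm _ _).trans (hcoc (m+1))
    obtain ⟨y, hy⟩ := hexact n m x hclosed
    refine ⟨Function.update g m y, fun k hk => ?_⟩
    rcases eq_or_lt_of_le hk with rfl | hlt
    · rw [Function.update_self, Function.update_of_ne (by omega : m + 1 ≠ m)]
      exact hy.trans hx
    · rw [Function.update_of_ne (by omega : k ≠ m),
        Function.update_of_ne (by omega : k + 1 ≠ m)]
      exact hg k (by omega)
  have Qall : ∀ j, Q (n+1-j) := by
    intro j
    induction j with
    | zero => simpa using base
    | succ j ih =>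
      have e : n+1-(j+1) = (n+1-j) - 1 := by omega
      rw [e]
      rcases hcase : n+1-j with _ | m
      · rw [hcase] at ih; simpa using ih
      · rw [hcase] at ih
        have : (m+1) - 1 = m := by omega
        rw [this]
        exact step m ih
  obtain ⟨g, hg⟩ : Q 0 := by
    have h := Qall (n+1)
    simpa using h
  have h0 : D' n 0 (g 0) = f 0 := by
    apply hinj (n+1)
    have hb' : D'' (n+1) 0 (D' n 0 (g 0)) = - D' (n+1) (0+1) (D'' n 0 (g 0)) :=
      eq_neg_of_add_eq_zero_right (hB n 0 (g 0))
    rw [hb', hg 0 le_rfl, map_sub, hA n (0+1) (g (0+1))]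
    simp only [sub_zero]
    exact neg_eq_of_add_eq_zero_right (hcoc 0)
  refine ⟨g, ?_⟩
  funext k
  cases k with
  | zero => simpa [Dtot] using h0
  | succ k =>
    show D' n (k+1) (g (k+1)) + D'' n k (g k) = f (k+1)
    rw [hg k (Nat.zero_le k)]
    abel
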